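/- arXiv:2603.29571 — 5 statements merged into one kernel-verified Lean document; each statement's English description precedes it below -/
import Mathlib

section
/- For any finite simple graph G, the clique number of G is at most the Lovász theta number of the complement of G, which in turn is at most the chromatic number of G. -/
open scoped BigOperators

/-- The Lovász theta number of a graph `G` on `n` vertices: the supremum of `∑_{i,j} X i j`
over symmetric positive semidefinite `X` with trace `1` and `X i j = 0` on edges of `G`. -/
noncomputable def lovaszTheta {n : ℕ} (G : SimpleGraph (Fin n)) : ℝ :=
  sSup {t : ℝ | ∃ X : Matrix (Fin n) (Fin n) ℝ, X.PosSemidef ∧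
    X.trace = 1 ∧ (∀ i j, G.Adj i j → X i j = 0) ∧ t = ∑ i, ∑ j, X i j}

/-!
A clique `s` of size `k` in `G` gives the matrix `k⁻¹ 𝟙_s 𝟙_sᵀ`, feasible for `Gᶜ` with entry sum
`k`. Conversely, let `X` be feasible for `Gᶜ` and let `w₁, …, wₘ` be the indicator vectors of the
colour classes of a proper `m`-colouring of `G`. Two distinct vertices of one colour are adjacent in
`Gᶜ`, so `∑ₜ wₜᵀ X wₜ = tr X = 1`, and since the quadratic form of `X` is convex,
`𝟙ᵀ X 𝟙 = (∑ₜ wₜ)ᵀ X (∑ₜ wₜ) ≤ m ∑ₜ wₜᵀ X wₜ = m`.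
-/

open Matrix Finset

namespace Matrix

variable {ι : Type*} [Fintype ι]

lemma IsSymm.dotProduct_mulVec_comm {R : Type*} [CommSemiring R] {X : Matrix ι ι R}
    (hX : X.IsSymm) (u v : ι → R) : u ⬝ᵥ X *ᵥ v = v ⬝ᵥ X *ᵥ u := by
  rw [dotProduct_mulVec, ← mulVec_transpose, hX.eq, dotProduct_comm]

lemma sum_sum_eq_one_dotProduct_mulVec_one {R : Type*} [NonAssocSemiring R] (X : Matrix ι ι R) :
    ∑ i, ∑ j, X i j = 1 ⬝ᵥ X *ᵥ 1 := by
  simp [mulVec, dotProduct]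

namespace PosSemidef

variable {X : Matrix ι ι ℝ}

lemma two_mul_dotProduct_mulVec_le (hX : X.PosSemidef) (u v : ι → ℝ) :
    2 * (u ⬝ᵥ X *ᵥ v) ≤ u ⬝ᵥ X *ᵥ u + v ⬝ᵥ X *ᵥ v := by
  have h := hX.dotProduct_mulVec_nonneg (u - v)
  simp only [star_trivial, mulVec_sub, sub_dotProduct, dotProduct_sub,
    (isHermitian_iff_isSymm.mp hX.isHermitian).dotProduct_mulVec_comm v u] at h
  linarith

lemma sum_dotProduct_mulVec_sum_le (hX : X.PosSemidef) {κ : Type*} (s : Finset κ)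
    (v : κ → ι → ℝ) :
    (∑ t ∈ s, v t) ⬝ᵥ X *ᵥ (∑ t ∈ s, v t) ≤ #s * ∑ t ∈ s, v t ⬝ᵥ X *ᵥ v t := by
  refine le_of_mul_le_mul_left ?_ two_pos
  calc 2 * ((∑ t ∈ s, v t) ⬝ᵥ X *ᵥ (∑ t ∈ s, v t))
      = ∑ t ∈ s, ∑ r ∈ s, 2 * (v t ⬝ᵥ X *ᵥ v r) := by
        simp only [mulVec_sum, dotProduct_sum, sum_dotProduct, mul_sum]
        exact sum_comm
    _ ≤ ∑ t ∈ s, ∑ r ∈ s, (v t ⬝ᵥ X *ᵥ v t + v r ⬝ᵥ X *ᵥ v r) :=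
        sum_le_sum fun t _ => sum_le_sum fun r _ => hX.two_mul_dotProduct_mulVec_le _ _
    _ = 2 * (#s * ∑ t ∈ s, v t ⬝ᵥ X *ᵥ v t) := by
        simp only [sum_add_distrib, sum_const, nsmul_eq_mul, ← mul_sum]
        ring

end PosSemidef

end Matrix

section Graph

variable {V : Type*} [Fintype V]

structure IsLovaszThetaFeasible (G : SimpleGraph V) (X : Matrix V V ℝ) : Prop where
  posSemidef : X.PosSemidef
  trace_eq_one : X.trace = 1
  apply_eq_zero_of_adj : ∀ i j, G.Adj i j → X i j = 0

variable {G : SimpleGraph V}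

lemma ite_dotProduct_mulVec_ite {R : Type*} [NonAssocSemiring R] [DecidableEq V]
    (s t : Finset V) (X : Matrix V V R) :
    (fun i => if i ∈ s then (1 : R) else 0) ⬝ᵥ X *ᵥ (fun j => if j ∈ t then 1 else 0) =
      ∑ i ∈ s, ∑ j ∈ t, X i j := by
  simp [dotProduct, mulVec, sum_ite_mem]

lemma sum_sum_le_card_of_coloring {α : Type*} [Fintype α] (C : G.Coloring α)
    {X : Matrix V V ℝ} (hX : IsLovaszThetaFeasible Gᶜ X) : ∑ i, ∑ j, X i j ≤ Fintype.card α := by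
  classical
  let w : α → V → ℝ := fun t i => if i ∈ ({i | C i = t} : Finset V) then 1 else 0
  have hw : ∑ t, w t = 1 := by ext i; simp [w]
  have hclass : ∀ t, w t ⬝ᵥ X *ᵥ w t = ∑ i with C i = t, X i i := by
    intro t
    rw [ite_dotProduct_mulVec_ite]
    refine sum_congr rfl fun i hi => sum_eq_single_of_mem i hi fun j hj hji => ?_
    simp only [mem_filter_univ] at hi hj
    exact hX.apply_eq_zero_of_adj i j ⟨hji.symm, fun hadj => C.valid hadj (hi.trans hj.symm)⟩
  calc ∑ i, ∑ j, X i j = (∑ t, w t) ⬝ᵥ X *ᵥ (∑ t, w t) := by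
        rw [hw, sum_sum_eq_one_dotProduct_mulVec_one]
    _ ≤ Fintype.card α * ∑ t, w t ⬝ᵥ X *ᵥ w t := hX.posSemidef.sum_dotProduct_mulVec_sum_le _ _
    _ = Fintype.card α * X.trace := by
        rw [sum_congr rfl fun t _ => hclass t, sum_fiberwise univ C fun i => X i i]
        rfl
    _ = Fintype.card α := by rw [hX.trace_eq_one, mul_one]

lemma SimpleGraph.IsNClique.exists_isLovaszThetaFeasible_compl {k : ℕ} {s : Finset V}
    (hs : G.IsNClique k s) (hk : 0 < k) :
    ∃ X, IsLovaszThetaFeasible Gᶜ X ∧ ∑ i, ∑ j, X i j = k := by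
  classical
  let v : V → ℝ := fun i => if i ∈ s then 1 else 0
  have hk₀ : (k : ℝ) ≠ 0 := by positivity
  have hv : ∑ i, v i = k := by simp [v, hs.card_eq]
  refine ⟨(k : ℝ)⁻¹ • vecMulVec v v, ⟨?_, ?_, ?_⟩, ?_⟩
  · simpa using (posSemidef_vecMulVec_self_star v).smul (inv_nonneg.2 k.cast_nonneg)
  · simp [trace_vecMulVec, dotProduct, v, hs.card_eq, hk₀]
  · intro i j hadj
    have hij : ¬(i ∈ s ∧ j ∈ s) := fun ⟨hi, hj⟩ => hadj.2 (hs.isClique hi hj hadj.1)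
    rcases not_and_or.mp hij with hi | hj <;> simp [vecMulVec_apply, v, *]
  · simp only [Matrix.smul_apply, vecMulVec_apply, smul_eq_mul, ← mul_sum, ← sum_mul, hv]
    field_simp

end Graph

section LovaszTheta

variable {n : ℕ} {G : SimpleGraph (Fin n)}

lemma lovaszTheta_nonneg (G : SimpleGraph (Fin n)) : 0 ≤ lovaszTheta G := by
  refine Real.sSup_nonneg fun t ⟨X, hX, _, _, ht⟩ => ?_
  simpa [ht, sum_sum_eq_one_dotProduct_mulVec_one] using hX.dotProduct_mulVec_nonneg 1

lemma le_lovaszTheta {X : Matrix (Fin n) (Fin n) ℝ} (hX : IsLovaszThetaFeasible G X) :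
    ∑ i, ∑ j, X i j ≤ lovaszTheta G := by
  refine le_csSup ⟨n, fun t ⟨Y, hY, htr, hadj, ht⟩ => ?_⟩ ⟨X, hX.1, hX.2, hX.3, rfl⟩
  have hY' : IsLovaszThetaFeasible Gᶜᶜ Y := by rw [compl_compl]; exact ⟨hY, htr, hadj⟩
  simpa [ht] using sum_sum_le_card_of_coloring Gᶜ.selfColoring hY'

lemma lovaszTheta_le {m : ℝ} (hm : 0 ≤ m)
    (h : ∀ X, IsLovaszThetaFeasible G X → ∑ i, ∑ j, X i j ≤ m) : lovaszTheta G ≤ m :=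
  Real.sSup_le (fun _ ⟨X, hX, htr, hadj, ht⟩ => ht ▸ h X ⟨hX, htr, hadj⟩) hm

end LovaszTheta

/-- Clique number ≤ Lovász theta of the complement ≤ chromatic number. -/
theorem clique_le_lovaszTheta_compl_le_chromatic {n : ℕ} (G : SimpleGraph (Fin n)) :
    (∀ (k : ℕ) (s : Finset (Fin n)), G.IsNClique k s → (k : ℝ) ≤ lovaszTheta Gᶜ) ∧
    (∀ m : ℕ, G.Colorable m → lovaszTheta Gᶜ ≤ (m : ℝ)) := by
  refine ⟨fun k s hs => ?_, fun m ⟨C⟩ => lovaszTheta_le m.cast_nonneg fun X hX => ?_⟩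
  · rcases k.eq_zero_or_pos with rfl | hk
    · exact_mod_cast lovaszTheta_nonneg Gᶜ
    · obtain ⟨X, hX, hsum⟩ := hs.exists_isLovaszThetaFeasible_compl hk
      exact hsum ▸ le_lovaszTheta hX
  · simpa using sum_sum_le_card_of_coloring C hX
end

section
/- If φ_1, …, φ_n are unit vectors in ℂ^d with n > d, then the maximum over i ≠ j of |⟨φ_i, φ_j⟩| is at least √((n − d)/(d(n − 1))) (the Welch bound). -/
/-!
Put the unit vectors as the columns of a matrix `M`. The Gram matrix `MᴴM` and the frame
matrix `MMᴴ` have the same trace `n` and the same Frobenius norm, so Cauchy–Schwarz on the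
diagonal of the `d × d` matrix `MMᴴ` gives `n² ≤ d · ∑ᵢⱼ |⟨φᵢ, φⱼ⟩|²`. The diagonal terms
contribute `n`, so the `n(n - 1)` off-diagonal terms sum to at least `n²/d - n`, and the largest
of them is at least the average `(n - d)/(d(n - 1))`.
-/

open Finset Module
open scoped Matrix InnerProductSpace

namespace Matrix

variable {m n 𝕜 : Type*} [Fintype m] [Fintype n] [RCLike 𝕜]

theorem trace_conjTranspose_mul_self_eq_sum_norm_sq (A : Matrix m n 𝕜) :
    (Aᴴ * A).trace = ((∑ i, ∑ j, ‖A i j‖ ^ 2 : ℝ) : 𝕜) := by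
  rw [trace, sum_comm]
  push_cast
  refine sum_congr rfl fun j _ => ?_
  simp only [diag_apply, mul_apply, conjTranspose_apply, RCLike.star_def, RCLike.conj_mul]

theorem sum_norm_sq_conjTranspose_mul_self_eq (A : Matrix m n 𝕜) :
    ∑ i, ∑ j, ‖(Aᴴ * A) i j‖ ^ 2 = ∑ a, ∑ b, ‖(A * Aᴴ) a b‖ ^ 2 := by
  apply RCLike.ofReal_injective (K := 𝕜)
  rw [← trace_conjTranspose_mul_self_eq_sum_norm_sq, ← trace_conjTranspose_mul_self_eq_sum_norm_sq]
  simp only [conjTranspose_mul, conjTranspose_conjTranspose, Matrix.mul_assoc]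
  rw [trace_mul_comm]
  simp only [Matrix.mul_assoc]

theorem norm_trace_sq_le_card_mul_sum_norm_sq {α : Type*} [SeminormedAddCommGroup α]
    (A : Matrix m m α) : ‖A.trace‖ ^ 2 ≤ Fintype.card m * ∑ a, ∑ b, ‖A a b‖ ^ 2 := by
  calc ‖A.trace‖ ^ 2 ≤ (∑ a, ‖A a a‖) ^ 2 := by
        gcongr
        exact norm_sum_le _ _
    _ ≤ Fintype.card m * ∑ a, ‖A a a‖ ^ 2 := sq_sum_le_card_mul_sum_sq
    _ ≤ Fintype.card m * ∑ a, ∑ b, ‖A a b‖ ^ 2 := by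
        gcongr with a
        exact single_le_sum (f := fun b => ‖A a b‖ ^ 2) (fun _ _ => sq_nonneg _) (mem_univ a)

end Matrix

theorem Finset.sum_product_self_eq_sum_add_sum_offDiag {α M : Type*} [DecidableEq α]
    [AddCommMonoid M] (s : Finset α) (f : α × α → M) :
    ∑ p ∈ s ×ˢ s, f p = ∑ i ∈ s, f (i, i) + ∑ p ∈ s.offDiag, f p := by
  rw [← diag_union_offDiag, sum_union (disjoint_diag_offDiag s), sum_diag]

section FramePotential

variable {𝕜 E ι : Type*} [RCLike 𝕜] [NormedAddCommGroup E] [InnerProductSpace 𝕜 E]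
  [FiniteDimensional 𝕜 E] [Fintype ι]

theorem sq_sum_norm_sq_le_finrank_mul_sum_norm_inner_sq (v : ι → E) :
    (∑ i, ‖v i‖ ^ 2) ^ 2 ≤ finrank 𝕜 E * ∑ i, ∑ j, ‖⟪v i, v j⟫_𝕜‖ ^ 2 := by
  set M : Matrix (Fin (finrank 𝕜 E)) ι 𝕜 :=
    .of fun a j => (stdOrthonormalBasis 𝕜 E).repr (v j) a
  have hgram : Matrix.gram 𝕜 v = Mᴴ * M := Matrix.gram_eq_conjTranspose_mul _ v
  have htrace : (M * Mᴴ).trace = ((∑ i, ‖v i‖ ^ 2 : ℝ) : 𝕜) := by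
    rw [Matrix.trace_mul_comm, ← hgram, Matrix.trace]
    push_cast
    exact sum_congr rfl fun i _ => inner_self_eq_norm_sq_to_K (v i)
  have hnonneg : 0 ≤ ∑ i, ‖v i‖ ^ 2 := sum_nonneg fun i _ => sq_nonneg _
  calc (∑ i, ‖v i‖ ^ 2) ^ 2 = ‖(M * Mᴴ).trace‖ ^ 2 := by
        rw [htrace, RCLike.norm_ofReal, abs_of_nonneg hnonneg]
    _ ≤ finrank 𝕜 E * ∑ a, ∑ b, ‖(M * Mᴴ) a b‖ ^ 2 := by
        simpa using Matrix.norm_trace_sq_le_card_mul_sum_norm_sq (M * Mᴴ)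
    _ = finrank 𝕜 E * ∑ i, ∑ j, ‖⟪v i, v j⟫_𝕜‖ ^ 2 := by
        simp only [← M.sum_norm_sq_conjTranspose_mul_self_eq, ← hgram, Matrix.gram_apply]

theorem sq_card_le_finrank_mul_card_add_sum_offDiag_norm_inner_sq [DecidableEq ι] (v : ι → E)
    (hv : ∀ i, ‖v i‖ = 1) :
    (Fintype.card ι : ℝ) ^ 2 ≤
      finrank 𝕜 E * (Fintype.card ι + ∑ p ∈ univ.offDiag, ‖⟪v p.1, v p.2⟫_𝕜‖ ^ 2) := by
  have hsplit : ∑ i, ∑ j, ‖⟪v i, v j⟫_𝕜‖ ^ 2 =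
      Fintype.card ι + ∑ p ∈ univ.offDiag, ‖⟪v p.1, v p.2⟫_𝕜‖ ^ 2 := by
    rw [← sum_product', sum_product_self_eq_sum_add_sum_offDiag]
    simp [inner_self_eq_norm_sq_to_K, hv]
  simpa [hv, hsplit] using sq_sum_norm_sq_le_finrank_mul_sum_norm_inner_sq (𝕜 := 𝕜) v

theorem exists_ne_div_le_norm_inner_sq (v : ι → E) (hv : ∀ i, ‖v i‖ = 1)
    (hcard : finrank 𝕜 E < Fintype.card ι) :
    ∃ i j, i ≠ j ∧ ((Fintype.card ι : ℝ) - finrank 𝕜 E) / (finrank 𝕜 E * (Fintype.card ι - 1))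
      ≤ ‖⟪v i, v j⟫_𝕜‖ ^ 2 := by
  classical
  set n := Fintype.card ι
  set d := finrank 𝕜 E
  set P := (univ : Finset ι).offDiag
  obtain ⟨i₀⟩ : Nonempty ι := Fintype.card_pos_iff.mp (by omega)
  have hd : 0 < d := finrank_pos_iff_exists_ne_zero.mpr ⟨v i₀, norm_ne_zero_iff.mp (by simp [hv])⟩
  have hn : (1 : ℝ) < n := by exact_mod_cast (show 1 < n by omega)
  have hcardP : (#P : ℝ) = n * (n - 1) := by
    rw [offDiag_card, card_univ, Nat.cast_sub (Nat.le_mul_self n), Nat.cast_mul]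
    ring
  have hP : P.Nonempty := by
    rw [← card_pos, ← Nat.cast_pos (α := ℝ), hcardP]
    nlinarith
  have havg : ∑ _p ∈ P, ((n : ℝ) - d) / (d * (n - 1)) ≤ ∑ p ∈ P, ‖⟪v p.1, v p.2⟫_𝕜‖ ^ 2 := by
    have hframe := sq_card_le_finrank_mul_card_add_sum_offDiag_norm_inner_sq (𝕜 := 𝕜) v hv
    calc ∑ _p ∈ P, ((n : ℝ) - d) / (d * (n - 1)) = n * (n - d) / d := by
          rw [sum_const, nsmul_eq_mul, hcardP]
          field_simp [sub_ne_zero.mpr hn.ne']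
      _ ≤ ∑ p ∈ P, ‖⟪v p.1, v p.2⟫_𝕜‖ ^ 2 := by
          rw [div_le_iff₀ (by positivity)]
          nlinarith
  obtain ⟨⟨i, j⟩, hij, hle⟩ := exists_le_of_sum_le hP havg
  exact ⟨i, j, (mem_offDiag.mp hij).2.2, hle⟩

end FramePotential

/-- The Welch bound: for `n > d` unit vectors in `ℂ^d`, some pair has
`|⟨φ_i, φ_j⟩| ≥ √((n − d)/(d(n − 1)))`. -/
theorem welch_bound {d n : ℕ} (hn : d < n) (φ : Fin n → EuclideanSpace ℂ (Fin d))
    (hφ : ∀ i, ‖φ i‖ = 1) :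
    ∃ i j, i ≠ j ∧
      Real.sqrt (((n : ℝ) - d) / (d * ((n : ℝ) - 1))) ≤ ‖(inner ℂ (φ i) (φ j) : ℂ)‖ := by
  obtain ⟨i, j, hij, hle⟩ := exists_ne_div_le_norm_inner_sq (𝕜 := ℂ) φ hφ (by simpa using hn)
  refine ⟨i, j, hij, Real.sqrt_le_iff.mpr ⟨norm_nonneg _, ?_⟩⟩
  simpa using hle
end

section
/- For a matrix A ∈ ℝ^{N×M}, the map x mod ±1 ↦ |Ax| (entrywise absolute value) is injective on ℝ^M modulo global sign if and only if A has the complement property: for every subset S of the rows of A, either the rows in S or the rows in its complement span ℝ^M. -/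
open Matrix Submodule

private lemma eq_zero_of_span_top {M : ℕ} {s : Set (Fin M → ℝ)}
    (h : Submodule.span ℝ s = ⊤) {v : Fin M → ℝ}
    (hv : ∀ w ∈ s, w ⬝ᵥ v = 0) : v = 0 := by
  let f : (Fin M → ℝ) →ₗ[ℝ] ℝ :=
    { toFun := fun w => w ⬝ᵥ v
      map_add' := fun a b => add_dotProduct a b v
      map_smul' := fun c a => smul_dotProduct c a v }
  have hker : Submodule.span ℝ s ≤ LinearMap.ker f := by
    rw [Submodule.span_le]
    intro w hw
    exact hv w hw
  rw [h, top_le_iff] at hker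
  have : f v = 0 := by
    have : v ∈ LinearMap.ker f := by rw [hker]; trivial
    exact this
  exact dotProduct_self_eq_zero.mp this

private lemma exists_perp {M : ℕ} {s : Set (Fin M → ℝ)}
    (h : Submodule.span ℝ s ≠ ⊤) : ∃ v : Fin M → ℝ, v ≠ 0 ∧ ∀ w ∈ s, w ⬝ᵥ v = 0 := by
  obtain ⟨f, hf, hmap⟩ :=
    Submodule.exists_dual_map_eq_bot_of_lt_top (lt_top_iff_ne_top.mpr h) inferInstance
  refine ⟨fun j => f (Pi.single j 1), ?_, ?_⟩
  · intro hv
    apply hf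
    apply LinearMap.ext
    intro w
    have hw : w = ∑ j, w j • (Pi.single j 1 : Fin M → ℝ) := by
      ext k; simp [Pi.single_apply, Finset.sum_apply, mul_comm]
    rw [hw]
    simp only [map_sum, _root_.map_smul]
    have : ∀ j, f (Pi.single j (1:ℝ)) = 0 := fun j => congrFun hv j
    simp [this]
  · intro w hw
    have hmem : f w = 0 := by
      have : f w ∈ Submodule.map f (Submodule.span ℝ s) :=
        ⟨w, Submodule.subset_span hw, rfl⟩
      rwa [hmap, Submodule.mem_bot] at this
    have hw2 : w = ∑ j, w j • (Pi.single j 1 : Fin M → ℝ) := by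
      ext k; simp [Pi.single_apply, Finset.sum_apply, mul_comm]
    have hfw : w ⬝ᵥ (fun j => f (Pi.single j 1)) = f w := by
      conv_rhs => rw [hw2]
      simp [dotProduct, map_sum, _root_.map_smul]
    rw [hfw, hmem]

/-- Real phase retrieval: the map `x mod ±1 ↦ |Ax|` is injective iff `A` has the
complement property (for every set `S` of rows, the rows in `S` or those in `Sᶜ`
span `ℝ^M`). -/
theorem phase_retrieval_injective_iff_complement_property {N M : ℕ}
    (A : Matrix (Fin N) (Fin M) ℝ) :
    (∀ x y : Fin M → ℝ, (∀ i, |A.mulVec x i| = |A.mulVec y i|) → x = y ∨ x = -y) ↔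
    (∀ S : Set (Fin N),
      Submodule.span ℝ ((fun i => A i) '' S) = ⊤ ∨
      Submodule.span ℝ ((fun i => A i) '' Sᶜ) = ⊤) := by
  constructor
  · intro hinj S
    by_contra hcon
    push_neg at hcon
    obtain ⟨hS, hSc⟩ := hcon
    obtain ⟨u, hu0, hu⟩ := exists_perp hS
    obtain ⟨v, hv0, hv⟩ := exists_perp hSc
    have key : ∀ i, |A.mulVec (u + v) i| = |A.mulVec (u - v) i| := by
      intro i
      simp only [Matrix.mulVec, dotProduct_add, dotProduct_sub]
      by_cases hi : i ∈ S
      · have : A i ⬝ᵥ u = 0 := hu (A i) ⟨i, hi, rfl⟩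
        rw [this]; simp [abs_neg]
      · have : A i ⬝ᵥ v = 0 := hv (A i) ⟨i, hi, rfl⟩
        rw [this]; simp
    rcases hinj _ _ key with h | h
    · apply hv0
      have : v + v = 0 := by
        have := sub_eq_zero.mpr h
        simpa [add_sub_sub_cancel] using this
      have h2 : (2:ℝ) • v = 0 := by rw [two_smul]; exact this
      simpa using h2
    · apply hu0
      have : u + u = 0 := by
        have : (u + v) + (u - v) = 0 := by rw [h]; simp
        simpa [add_add_sub_cancel] using this
      have h2 : (2:ℝ) • u = 0 := by rw [two_smul]; exact this
      simpa using h2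
  · intro hcp x y hxy
    set S : Set (Fin N) := {i | A.mulVec x i = A.mulVec y i} with hSdef
    rcases hcp S with h | h
    · left
      have : x - y = 0 := by
        apply eq_zero_of_span_top h
        rintro w ⟨i, hi, rfl⟩
        have : A i ⬝ᵥ (x - y) = 0 := by
          rw [dotProduct_sub]
          have := hi
          simp only [hSdef, Set.mem_setOf_eq, Matrix.mulVec] at this
          rw [this]; ring
        exact this
      exact sub_eq_zero.mp this
    · right
      have : x + y = 0 := by
        apply eq_zero_of_span_top h
        rintro w ⟨i, hi, rfl⟩
        have hne : A.mulVec x i ≠ A.mulVec y i := hi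
        have habs := hxy i
        have : A.mulVec x i = -(A.mulVec y i) := by
          rcases abs_eq_abs.mp habs with h' | h'
          · exact absurd h' hne
          · exact h'
        show A i ⬝ᵥ (x + y) = 0
        rw [dotProduct_add]
        simp only [Matrix.mulVec] at this
        rw [this]; ring
      exact eq_neg_of_add_eq_zero_left this
end

section
/- If A ∈ ℝ^{N×M} with N ≤ 2M − 2, then the map x mod ±1 ↦ |Ax| is not injective; i.e., there exist x, y ∈ ℝ^M with x ≠ ±y and |Ax| = |Ay|. -/
lemma exists_mem_ker_aux {k m : ℕ} (hk : k < m) (B : Matrix (Fin k) (Fin m) ℝ) :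
    ∃ u : Fin m → ℝ, u ≠ 0 ∧ B.mulVec u = 0 := by
  have hrn := LinearMap.finrank_range_add_finrank_ker B.mulVecLin
  have hdom : Module.finrank ℝ (Fin m → ℝ) = m := by simp
  have hr : Module.finrank ℝ (LinearMap.range B.mulVecLin) ≤ k := by
    calc Module.finrank ℝ (LinearMap.range B.mulVecLin)
        ≤ Module.finrank ℝ (Fin k → ℝ) := Submodule.finrank_le _
      _ = k := by simp
  have hker : (LinearMap.ker B.mulVecLin : Submodule ℝ (Fin m → ℝ)) ≠ ⊥ := by
    intro hb
    rw [hb] at hrn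
    simp [hdom] at hrn
    omega
  obtain ⟨u, hu, hune⟩ := Submodule.exists_mem_ne_zero_of_ne_bot hker
  exact ⟨u, hune, hu⟩

/-- With `N ≤ 2M − 2` measurements, real phase retrieval is not injective modulo sign. -/
theorem phase_retrieval_not_injective {N M : ℕ} (h : (N : ℤ) ≤ 2 * M - 2)
    (A : Matrix (Fin N) (Fin M) ℝ) :
    ∃ x y : Fin M → ℝ, x ≠ y ∧ x ≠ -y ∧ ∀ i, |A.mulVec x i| = |A.mulVec y i| := by
  have hM : 1 ≤ M := by omega
  have hN : N ≤ 2 * (M - 1) := by omega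
  have hlt : M - 1 < M := by omega
  set B1 : Matrix (Fin (M - 1)) (Fin M) ℝ :=
    fun i j => if h : (i : ℕ) < N then A ⟨i, h⟩ j else 0 with hB1
  set B2 : Matrix (Fin (M - 1)) (Fin M) ℝ :=
    fun i j => if h : (i : ℕ) + (M - 1) < N then A ⟨(i : ℕ) + (M - 1), h⟩ j else 0 with hB2
  obtain ⟨u, hu, hku⟩ := exists_mem_ker_aux hlt B1
  obtain ⟨v, hv, hkv⟩ := exists_mem_ker_aux hlt B2
  refine ⟨u + v, u - v, ?_, ?_, ?_⟩
  · intro he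
    apply hv
    have : (2 : ℝ) • v = 0 := by
      have := congrArg (fun w => w - (u - v)) he
      simpa [two_smul] using this
    simpa using smul_eq_zero.mp this |>.resolve_left (by norm_num)
  · intro he
    apply hu
    have : (2 : ℝ) • u = 0 := by
      have := congrArg (fun w => w + (u - v)) he
      simpa [two_smul] using this
    simpa using smul_eq_zero.mp this |>.resolve_left (by norm_num)
  · intro i
    have hadd : A.mulVec (u + v) i = A.mulVec u i + A.mulVec v i := by
      rw [Matrix.mulVec_add]; rfl
    have hsub : A.mulVec (u - v) i = A.mulVec u i - A.mulVec v i := by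
      rw [Matrix.mulVec_sub]; rfl
    by_cases hi : (i : ℕ) < M - 1
    · -- row i is in block 1: A row i ⬝ u = 0
      have hu0 : A.mulVec u i = 0 := by
        have := congrFun hku ⟨(i : ℕ), hi⟩
        simpa [hB1, Matrix.mulVec, dotProduct, i.isLt, Fin.eta] using this
      rw [hadd, hsub, hu0, zero_add, zero_sub, abs_neg]
    · -- row i is in block 2
      have hi2 : (i : ℕ) - (M - 1) + (M - 1) = (i : ℕ) := by omega
      have hlt2 : (i : ℕ) - (M - 1) < M - 1 := by have := i.isLt; omega
      have hv0 : A.mulVec v i = 0 := by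
        have := congrFun hkv ⟨(i : ℕ) - (M - 1), hlt2⟩
        have hN' : (i : ℕ) - (M - 1) + (M - 1) < N := by rw [hi2]; exact i.isLt
        simp only [hB2, Matrix.mulVec, dotProduct, Pi.zero_apply] at this
        have hieq : (⟨(i:ℕ) - (M-1) + (M-1), hN'⟩ : Fin N) = i := Fin.ext hi2
        simp only [dif_pos hN', hieq] at this
        simpa [Matrix.mulVec, dotProduct] using this
      rw [hadd, hsub, hv0, add_zero, sub_zero]
end

section
/- Let p ≡ 1 (mod 4) be prime and G_p the Paley graph on p vertices. Then the clique number satisfies ω(G_p) ≤ √p. -/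
/-!
Take a nonsquare `l`. Differences inside a clique `s` are squares, so differences of distinct
elements of `l • s` are nonsquares; hence `a - a' = b - b'` with `a, a' ∈ s` and `b, b' ∈ l • s`
forces `a = a'`. Thus `(a, b) ↦ a - b` is injective on `s × l • s`, and `|s|² ≤ p`.
-/

/-- The Paley graph on `ℤ/pℤ` (for `p ≡ 1 (mod 4)`, where `−1` is a square, the
condition below is equivalent to `i − j` being a nonzero quadratic residue). -/
def paleyGraph (p : ℕ) : SimpleGraph (ZMod p) where
  Adj i j := i ≠ j ∧ IsSquare (i - j) ∧ IsSquare (j - i)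
  symm := ⟨fun i j h => ⟨h.1.symm, h.2.2, h.2.1⟩⟩
  loopless := ⟨fun i h => h.1 rfl⟩

open Finset

theorem Finset.card_mul_card_le_of_sub_eq_sub {G : Type*} [AddCommGroup G] [Fintype G]
    {s t : Finset G} (h : ∀ a ∈ s, ∀ a' ∈ s, ∀ b ∈ t, ∀ b' ∈ t, a - a' = b - b' → a = a') :
    #s * #t ≤ Fintype.card G := by
  rw [← card_product, ← card_univ]
  refine card_le_card_of_injOn (fun x => x.1 - x.2) (fun _ _ => mem_coe.2 (mem_univ _)) ?_
  rintro ⟨a, b⟩ hab ⟨a', b'⟩ hab' hsub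
  obtain ⟨ha, hb⟩ := mem_product.1 hab
  obtain ⟨ha', hb'⟩ := mem_product.1 hab'
  obtain rfl : a = a' := h a ha a' ha' b hb b' hb' (sub_eq_sub_iff_sub_eq_sub.1 hsub)
  exact Prod.ext rfl (sub_right_inj.1 hsub)

theorem not_isSquare_mul_of_isSquare {F : Type*} [Field F] {a b : F} (ha : ¬IsSquare a)
    (hb : IsSquare b) (hb0 : b ≠ 0) : ¬IsSquare (a * b) :=
  fun hab => ha (by simpa [hb0] using hab.div hb)

theorem FiniteField.card_sq_le_of_isSquare_sub {F : Type*} [Field F] [Fintype F]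
    (hF : ringChar F ≠ 2) {s : Finset F} (hs : ∀ a ∈ s, ∀ b ∈ s, IsSquare (a - b)) :
    #s ^ 2 ≤ Fintype.card F := by
  obtain ⟨l, hl⟩ := exists_nonsquare hF
  have hl0 : l ≠ 0 := by rintro rfl; exact hl .zero
  let t := s.map ⟨(l * ·), mul_right_injective₀ hl0⟩
  calc #s ^ 2 = #s * #t := by rw [sq, card_map]
    _ ≤ Fintype.card F := card_mul_card_le_of_sub_eq_sub ?_
  simp only [t, mem_map, Function.Embedding.coeFn_mk]
  rintro a ha a' ha' _ ⟨c, hc, rfl⟩ _ ⟨c', hc', rfl⟩ hsub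
  by_contra hne
  have hcc : c - c' ≠ 0 := by
    rintro hcc
    rw [← mul_sub, hcc, mul_zero, sub_eq_zero] at hsub
    exact hne hsub
  rw [← mul_sub] at hsub
  exact not_isSquare_mul_of_isSquare hl (hs c hc c' hc') hcc (hsub ▸ hs a ha a' ha')

theorem paleyGraph.isSquare_sub_of_isClique {p : ℕ} {s : Set (ZMod p)}
    (hs : (paleyGraph p).IsClique s) : ∀ a ∈ s, ∀ b ∈ s, IsSquare (a - b) := by
  intro a ha b hb
  obtain rfl | hab := eq_or_ne a b
  · simp
  · exact (hs ha hb hab).2.1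

/-- The clique number of the Paley graph is at most `√p`. -/
theorem paleyGraph_clique_le_sqrt (p : ℕ) [Fact p.Prime] (hp4 : p % 4 = 1) :
    ∀ (k : ℕ) (s : Finset (ZMod p)), (paleyGraph p).IsNClique k s →
      (k : ℝ) ≤ Real.sqrt p := by
  intro k s hs
  have hchar : ringChar (ZMod p) ≠ 2 := by rw [ZMod.ringChar_zmod_n]; omega
  have hk : k ^ 2 ≤ p := by
    simpa [hs.card_eq, ZMod.card] using FiniteField.card_sq_le_of_isSquare_sub hchar
      (paleyGraph.isSquare_sub_of_isClique hs.isClique)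
  exact Real.le_sqrt_of_sq_le (by exact_mod_cast hk)
end
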